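/- Let μ be a set partition of N = {1,…,n} and let F be a finite field with q elements. Then the number of strictly upper-triangular n×n matrices v over F with u_μ·v = v equals q^{n(n−1)/2 − Σ_{(i,j)∈μ} (n−j)}. -/

import Mathlib

open Finset

variable {F : Type*} [Field F] [Fintype F] [DecidableEq F]

/-- A set partition of `{1, …, n}` (modelled as `Fin n`), recorded as its set of arcs:
pairs `(i, j)` with `i < j`.  Note that `Fin n` is 0-indexed, so the element `j ∈ Fin n`
corresponds to `j + 1 ∈ {1, …, n}`. -/
def IsSP (n : ℕ) (lam : Finset (Fin n × Fin n)) : Prop :=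
  (∀ p ∈ lam, p.1 < p.2) ∧ ∀ p ∈ lam, ∀ q ∈ lam, (p.1 = q.1 ↔ p.2 = q.2)

/-- `u_μ = I + ∑_{(i,j) ∈ μ} E_{ij}`. -/
def uMat {F : Type*} [Field F] [Fintype F] [DecidableEq F] {n : ℕ}
    (mu : Finset (Fin n × Fin n)) : Matrix (Fin n) (Fin n) F :=
  1 + ∑ p ∈ mu, Matrix.single p.1 p.2 1

/-!
Row `a` of `u_μ v` is row `a` of `v` plus row `j` of `v` if `(a, j)` is an arc.
Since each `a` is the left end of at most one arc, `u_μ v = v` says exactly that the rows of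
`v` indexed by right ends of arcs vanish. So the matrices counted are those supported on the
strictly upper-triangular positions `(a, b)` with `a` not a right end, and the right end `j`
of an arc removes the `n - j` positions of its row.
-/

theorem Matrix.card_filter_forall_notMem_eq_zero {ι κ M : Type*} [Fintype ι] [DecidableEq ι]
    [Fintype κ] [DecidableEq κ] [Fintype M] [Zero M] (t : ι → Finset κ)
    [DecidablePred fun v : Matrix ι κ M => ∀ i j, j ∉ t i → v i j = 0] :
    #{v : Matrix ι κ M | ∀ i j, j ∉ t i → v i j = 0} = Fintype.card M ^ ∑ i, #(t i) := by
  have hpi : ({v : Matrix ι κ M | ∀ i j, j ∉ t i → v i j = 0} : Finset _) =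
      (Fintype.piFinset fun i => Fintype.piFinset fun j =>
        if j ∈ t i then univ else {(0 : M)}).map Matrix.of.toEmbedding := by
    ext v
    simp only [mem_filter, mem_univ, true_and, mem_map_equiv, Fintype.mem_piFinset]
    refine forall_congr' fun i => forall_congr' fun j => ?_
    split_ifs with h <;> simp [h]
  simp [hpi, card_map, apply_ite Finset.card, prod_ite_mem, prod_pow_eq_pow_sum]

section StrictUpperSupport

variable {α : Type*} [Preorder α] [LocallyFiniteOrderTop α] [DecidableEq α]

def strictUpperSupport (R : Finset α) (i : α) : Finset α :=
  if i ∈ R then ∅ else Ioi i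

theorem eq_zero_outside_strictUpperSupport_iff {M : Type*} [Zero M] (R : Finset α)
    (v : Matrix α α M) :
    ((∀ i j, ¬ i < j → v i j = 0) ∧ ∀ i ∈ R, ∀ j, v i j = 0) ↔
      ∀ i j, j ∉ strictUpperSupport R i → v i j = 0 := by
  unfold strictUpperSupport
  refine ⟨fun ⟨hlt, hR⟩ i j hj => ?_, fun h => ⟨fun i j hij => h i j ?_, fun i hi j => h i j ?_⟩⟩
  · split_ifs at hj with hi
    · exact hR i hi j
    · exact hlt i j (by simpa using hj)
  · split_ifs <;> simp [hij]
  · simp [hi]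

end StrictUpperSupport

theorem Fin.sum_card_strictUpperSupport {n : ℕ} (R : Finset (Fin n)) :
    ∑ a, #(strictUpperSupport R a) = n * (n - 1) / 2 - ∑ a ∈ R, (n - ((a : ℕ) + 1)) := by
  have htotal : ∑ a : Fin n, (n - ((a : ℕ) + 1)) = n * (n - 1) / 2 := by
    rw [Fin.sum_univ_eq_sum_range (fun a => n - (a + 1)), ← sum_range_id]
    simpa only [id, Nat.sub_sub, Nat.add_comm 1] using sum_range_reflect id n
  have hsplit : ∑ a, #(strictUpperSupport R a) + ∑ a ∈ R, (n - ((a : ℕ) + 1)) =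
      ∑ a : Fin n, (n - ((a : ℕ) + 1)) := by
    rw [← univ_inter R, ← sum_ite_mem, ← sum_add_distrib]
    refine sum_congr rfl fun a _ => ?_
    unfold strictUpperSupport
    split_ifs <;> simp_all [Fin.card_Ioi, Nat.sub_sub, Nat.add_comm 1]
  rw [← htotal, ← hsplit, Nat.add_sub_cancel]

namespace IsSP

variable {n : ℕ} {mu : Finset (Fin n × Fin n)}

theorem injOn_fst (hmu : IsSP n mu) : Set.InjOn Prod.fst (mu : Set (Fin n × Fin n)) :=
  fun p hp q hq h => Prod.ext h ((hmu.2 p hp q hq).1 h)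

theorem injOn_snd (hmu : IsSP n mu) : Set.InjOn Prod.snd (mu : Set (Fin n × Fin n)) :=
  fun p hp q hq h => Prod.ext ((hmu.2 p hp q hq).2 h) h

end IsSP

namespace uMat

variable {n : ℕ} (mu : Finset (Fin n × Fin n))

theorem mul_apply (v : Matrix (Fin n) (Fin n) F) (a b : Fin n) :
    (uMat mu * v : Matrix (Fin n) (Fin n) F) a b = v a b + ∑ p ∈ mu with p.1 = a, v p.2 b := by
  rw [uMat, Matrix.add_mul, Matrix.one_mul, Matrix.add_apply, Matrix.sum_mul, Matrix.sum_apply,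
    sum_filter]
  refine congrArg _ (sum_congr rfl fun p _ => ?_)
  split_ifs with h
  · rw [← h, Matrix.single_mul_apply_same, one_mul]
  · exact Matrix.single_mul_apply_of_ne (h := Ne.symm h) ..

theorem mul_eq_self_iff (hmu : Set.InjOn Prod.fst (mu : Set (Fin n × Fin n)))
    {v : Matrix (Fin n) (Fin n) F} :
    uMat mu * v = v ↔ ∀ p ∈ mu, ∀ b, v p.2 b = 0 := by
  simp only [← Matrix.ext_iff, mul_apply, add_eq_left]
  refine ⟨fun h p hp b => ?_, fun h a b => sum_eq_zero fun p hp => h p (mem_filter.1 hp).1 b⟩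
  have hsingle : {q ∈ mu | q.1 = p.1} = {p} :=
    eq_singleton_iff_unique_mem.2 ⟨mem_filter.2 ⟨hp, rfl⟩,
      fun q hq => hmu (mem_filter.1 hq).1 hp (mem_filter.1 hq).2⟩
  simpa [hsingle] using h p.1 b

end uMat

open Classical in
/-- With `j : Fin n` 0-indexed, the paper's exponent term `n - j` of an arc `(i, j)` reads
`n - (j + 1)`. -/
theorem stmt16 (n : ℕ) (mu : Finset (Fin n × Fin n)) (hmu : IsSP n mu) :
    ((univ : Finset (Matrix (Fin n) (Fin n) F)).filter
        (fun v => (∀ i j : Fin n, ¬ i < j → v i j = 0) ∧ uMat mu * v = v)).card =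
      Fintype.card F ^ (n * (n - 1) / 2 - ∑ p ∈ mu, (n - ((p.2 : ℕ) + 1))) := by
  set R := mu.image Prod.snd
  have hsupport (v : Matrix (Fin n) (Fin n) F) :
      ((∀ i j : Fin n, ¬ i < j → v i j = 0) ∧ uMat mu * v = v) ↔
        ∀ i j, j ∉ strictUpperSupport R i → v i j = 0 := by
    rw [uMat.mul_eq_self_iff mu hmu.injOn_fst, ← eq_zero_outside_strictUpperSupport_iff,
      forall_mem_image]
  rw [filter_congr fun v _ => hsupport v, Matrix.card_filter_forall_notMem_eq_zero,
    Fin.sum_card_strictUpperSupport, sum_image hmu.injOn_snd]
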